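/- arXiv:2306.00392 — 6 statements merged into one kernel-verified Lean document; each statement's English description precedes it below -/
import Mathlib

section
/- Fix r > 0. Let u = (u₁, u₂) and v = (v₁, v₂) be points of ℝ² with 0 < u₂ < r, 0 < v₂ < r, and u₁ ≤ v₁. Set a = √(r² − u₂²), b = √(r² − v₂²), and d = v₁ − u₁, and assume d < a + b. Then the circle of radius r centered at (u₁ + a, 0) passes through u, the circle of radius r centered at (v₁ − b, 0) passes through v, these two centers are distinct, and the unique common point of the two circles with strictly positive second coordinate has second coordinate equal to √(r² − ((a + b − d)/2)²). -/
/-!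
Both bounding geodesics are circles of radius `r` centred on the real axis, at `c₁ = u₁ + a` and
`c₂ = v₁ - b`. Subtracting the two circle equations leaves a linear equation, so every common
point lies on the perpendicular bisector `x = (c₁ + c₂)/2`, and then Pythagoras gives the height
`√(r² - ((c₁ - c₂)/2)²)`. Since `c₁ - c₂ = a + b - d`, the hypotheses `0 ≤ d < a + b` and
`a, b < r` say exactly that `0 < c₁ - c₂ < 2r`, i.e. the circles are distinct and do meet above
the axis.
-/

/-- Euclidean distance on ℝ², viewed as pairs. -/
noncomputable def edist2 (p q : ℝ × ℝ) : ℝ :=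
  Real.sqrt ((p.1 - q.1) ^ 2 + (p.2 - q.2) ^ 2)

lemma edist2_sq (p q : ℝ × ℝ) : edist2 p q ^ 2 = (p.1 - q.1) ^ 2 + (p.2 - q.2) ^ 2 :=
  Real.sq_sqrt (by positivity)

lemma edist2_axis_eq_iff {p : ℝ × ℝ} {c r : ℝ} (hr : 0 ≤ r) :
    edist2 p (c, 0) = r ↔ (p.1 - c) ^ 2 + p.2 ^ 2 = r ^ 2 := by
  rw [edist2, Real.sqrt_eq_iff_eq_sq (by positivity) hr, sub_zero]

lemma sq_add_sq_of_edist2_axis_eq {p : ℝ × ℝ} {c r : ℝ} (h : edist2 p (c, 0) = r) :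
    (p.1 - c) ^ 2 + p.2 ^ 2 = r ^ 2 := by
  rw [← h, edist2_sq, sub_zero]

section Leg

variable {p : ℝ × ℝ} {r : ℝ}

lemma edist2_add_sqrt_sub_sq (hr : 0 ≤ r) (hp : p.2 ^ 2 ≤ r ^ 2) :
    edist2 p (p.1 + √(r ^ 2 - p.2 ^ 2), 0) = r := by
  rw [edist2_axis_eq_iff hr]
  linear_combination Real.sq_sqrt (sub_nonneg.2 hp)

lemma edist2_sub_sqrt_sub_sq (hr : 0 ≤ r) (hp : p.2 ^ 2 ≤ r ^ 2) :
    edist2 p (p.1 - √(r ^ 2 - p.2 ^ 2), 0) = r := by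
  rw [edist2_axis_eq_iff hr]
  linear_combination Real.sq_sqrt (sub_nonneg.2 hp)

end Leg

lemma sqrt_sq_sub_sq_lt {y r : ℝ} (hy : 0 < y) (hr : 0 < r) : √(r ^ 2 - y ^ 2) < r :=
  (Real.sqrt_lt' hr).2 (by nlinarith)

section TwoCircles

variable {c₁ c₂ r : ℝ} {p : ℝ × ℝ}

lemma fst_eq_of_edist2_axis_eq (hc : c₁ ≠ c₂) (h₁ : edist2 p (c₁, 0) = r)
    (h₂ : edist2 p (c₂, 0) = r) : p.1 = (c₁ + c₂) / 2 := by
  have hfac : (c₂ - c₁) * (2 * p.1 - c₁ - c₂) = 0 := by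
    linear_combination sq_add_sq_of_edist2_axis_eq h₁ - sq_add_sq_of_edist2_axis_eq h₂
  have := (mul_eq_zero.1 hfac).resolve_left (sub_ne_zero.2 hc.symm)
  linarith

lemma snd_eq_of_edist2_axis_eq (hc : c₁ ≠ c₂) (h₁ : edist2 p (c₁, 0) = r)
    (h₂ : edist2 p (c₂, 0) = r) (hp : 0 < p.2) : p.2 = √(r ^ 2 - ((c₁ - c₂) / 2) ^ 2) := by
  have hsq : p.2 ^ 2 = r ^ 2 - ((c₁ - c₂) / 2) ^ 2 := by
    have h := sq_add_sq_of_edist2_axis_eq h₁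
    rw [fst_eq_of_edist2_axis_eq hc h₁ h₂] at h
    linear_combination h
  rw [← hsq, Real.sqrt_sq hp.le]

lemma edist2_upper_meet (hr : 0 ≤ r) (h : ((c₁ - c₂) / 2) ^ 2 ≤ r ^ 2) :
    edist2 ((c₁ + c₂) / 2, √(r ^ 2 - ((c₁ - c₂) / 2) ^ 2)) (c₁, 0) = r ∧
    edist2 ((c₁ + c₂) / 2, √(r ^ 2 - ((c₁ - c₂) / 2) ^ 2)) (c₂, 0) = r := by
  have hy := Real.sq_sqrt (sub_nonneg.2 h)
  constructor <;> rw [edist2_axis_eq_iff hr] <;> linear_combination hy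

lemma existsUnique_upper_meet (hr : 0 ≤ r) (hc : c₁ ≠ c₂) (h : ((c₁ - c₂) / 2) ^ 2 < r ^ 2) :
    ∃! p : ℝ × ℝ, edist2 p (c₁, 0) = r ∧ edist2 p (c₂, 0) = r ∧ 0 < p.2 := by
  obtain ⟨h₁, h₂⟩ := edist2_upper_meet hr h.le
  refine ⟨_, ⟨h₁, h₂, Real.sqrt_pos.2 (sub_pos.2 h)⟩, fun p ⟨hp₁, hp₂, hp⟩ => ?_⟩
  exact Prod.ext (fst_eq_of_edist2_axis_eq hc hp₁ hp₂) (snd_eq_of_edist2_axis_eq hc hp₁ hp₂ hp)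

end TwoCircles

theorem penumbral_sup2_height_general
    (r : ℝ) (u v : ℝ × ℝ)
    (hu2 : 0 < u.2) (hu2r : u.2 < r) (hv2 : 0 < v.2) (hv2r : v.2 < r)
    (hx : u.1 ≤ v.1)
    (a b d : ℝ)
    (ha : a = Real.sqrt (r ^ 2 - u.2 ^ 2)) (hb : b = Real.sqrt (r ^ 2 - v.2 ^ 2))
    (hd : d = v.1 - u.1) (hdab : d < a + b) :
    edist2 u (u.1 + a, 0) = r ∧
    edist2 v (v.1 - b, 0) = r ∧
    ((u.1 + a, (0 : ℝ)) : ℝ × ℝ) ≠ (v.1 - b, 0) ∧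
    (∃! p : ℝ × ℝ,
        edist2 p (u.1 + a, 0) = r ∧ edist2 p (v.1 - b, 0) = r ∧ 0 < p.2) ∧
    (∀ p : ℝ × ℝ,
        edist2 p (u.1 + a, 0) = r → edist2 p (v.1 - b, 0) = r → 0 < p.2 →
        p.2 = Real.sqrt (r ^ 2 - ((a + b - d) / 2) ^ 2)) := by
  have hr : 0 < r := hu2.trans hu2r
  have ha0 : 0 ≤ a := ha ▸ Real.sqrt_nonneg _
  have hb0 : 0 ≤ b := hb ▸ Real.sqrt_nonneg _
  have har : a < r := ha ▸ sqrt_sq_sub_sq_lt hu2 hr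
  have hbr : b < r := hb ▸ sqrt_sq_sub_sq_lt hv2 hr
  have hgap : u.1 + a - (v.1 - b) = a + b - d := by rw [hd]; ring
  have hc : u.1 + a ≠ v.1 - b := fun h => by linarith
  have hmeet : ((u.1 + a - (v.1 - b)) / 2) ^ 2 < r ^ 2 := sq_lt_sq' (by linarith) (by linarith)
  refine ⟨ha ▸ edist2_add_sqrt_sub_sq hr.le (pow_le_pow_left₀ hu2.le hu2r.le 2),
    hb ▸ edist2_sub_sqrt_sub_sq hr.le (pow_le_pow_left₀ hv2.le hv2r.le 2),
    fun h => hc (congrArg Prod.fst h), existsUnique_upper_meet hr.le hc hmeet,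
    fun p h₁ h₂ hp => ?_⟩
  rw [snd_eq_of_edist2_axis_eq hc h₁ h₂ hp, hgap]

/-- With `a = √(r² − u₂²)`, `b = √(r² − v₂²)`, `d = v₁ − u₁ < a + b`:
the circle of radius `r` centered at `(u₁ + a, 0)` passes through `u`,
the circle of radius `r` centered at `(v₁ − b, 0)` passes through `v`,
the centers are distinct, and the unique common point of the two circles
with strictly positive second coordinate has height `√(r² − ((a+b−d)/2)²)`. -/
theorem penumbral_sup2_height
    (r : ℝ) (hr : 0 < r) (u v : ℝ × ℝ)
    (hu2 : 0 < u.2) (hu2r : u.2 < r) (hv2 : 0 < v.2) (hv2r : v.2 < r)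
    (hx : u.1 ≤ v.1)
    (a b d : ℝ)
    (ha : a = Real.sqrt (r ^ 2 - u.2 ^ 2)) (hb : b = Real.sqrt (r ^ 2 - v.2 ^ 2))
    (hd : d = v.1 - u.1) (hdab : d < a + b) :
    edist2 u (u.1 + a, 0) = r ∧
    edist2 v (v.1 - b, 0) = r ∧
    ((u.1 + a, (0 : ℝ)) : ℝ × ℝ) ≠ (v.1 - b, 0) ∧
    (∃! p : ℝ × ℝ,
        edist2 p (u.1 + a, 0) = r ∧ edist2 p (v.1 - b, 0) = r ∧ 0 < p.2) ∧
    (∀ p : ℝ × ℝ,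
        edist2 p (u.1 + a, 0) = r → edist2 p (v.1 - b, 0) = r → 0 < p.2 →
        p.2 = Real.sqrt (r ^ 2 - ((a + b - d) / 2) ^ 2)) :=
  penumbral_sup2_height_general r u v hu2 hu2r hv2 hv2r hx a b d ha hb hd hdab
end

section
/- Let s > 0 and let u = (u₁, u₂) and v = (v₁, v₂) be points of ℝ². Define M = max(u₂, v₂, |u₁ − v₁|/(2s) + (u₂ + v₂)/2) and T = {t ∈ ℝ : ∃ x ∈ ℝ, |u₁ − x| ≤ s·(t − u₂) and |v₁ − x| ≤ s·(t − v₂)}. Then M is the least element of T; that is, M ∈ T and M ≤ t for every t ∈ T. -/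
/-! Two closed intervals `[p - a, p + a]` and `[q - b, q + b]` meet exactly when both are
nonempty and `|p - q| ≤ a + b`, with `max (p - a) (q - b)` a common point. For a root at
height `t` the radii are `s (t - u₂)` and `s (t - v₂)`, so `T` is cut out by `u₂ ≤ t`,
`v₂ ≤ t` and `|u₁ - v₁| ≤ s (t - u₂) + s (t - v₂)`; hence `T = [M, ∞)`. -/

theorem exists_abs_sub_le_and_abs_sub_le_iff {α : Type*} [AddCommGroup α] [LinearOrder α]
    [IsOrderedAddMonoid α] {p q a b : α} :
    (∃ x, |p - x| ≤ a ∧ |q - x| ≤ b) ↔ 0 ≤ a ∧ 0 ≤ b ∧ |p - q| ≤ a + b := by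
  constructor
  · rintro ⟨x, hpx, hqx⟩
    refine ⟨(abs_nonneg _).trans hpx, (abs_nonneg _).trans hqx, ?_⟩
    calc |p - q| ≤ |p - x| + |x - q| := abs_sub_le p x q
      _ = |p - x| + |q - x| := by rw [abs_sub_comm x q]
      _ ≤ a + b := add_le_add hpx hqx
  · rintro ⟨ha, hb, hpq⟩
    obtain ⟨hqp, hpq⟩ := abs_le.mp hpq
    refine ⟨max (p - a) (q - b), abs_le.mpr ⟨?_, ?_⟩, abs_le.mpr ⟨?_, ?_⟩⟩ <;>
      grind [le_max_left, le_max_right, max_le_iff]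

theorem div_two_mul_add_half_le_iff {K : Type*} [Field K] [LinearOrder K] [IsStrictOrderedRing K]
    {s d c₁ c₂ t : K} (hs : 0 < s) :
    d / (2 * s) + (c₁ + c₂) / 2 ≤ t ↔ d ≤ s * (t - c₁) + s * (t - c₂) := by
  rw [← le_sub_iff_add_le, div_le_iff₀ (by positivity)]
  constructor <;> intro h <;> linarith

/-- `M = max(u₂, v₂, |u₁ − v₁|/(2s) + (u₂ + v₂)/2)` is the least height `t`
for which some umbral cone root `(x, t)` has both `u` and `v` in its cone,
i.e. the least element of
`T = {t | ∃ x, |u₁ − x| ≤ s(t − u₂) ∧ |v₁ − x| ≤ s(t − v₂)}`. -/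
theorem umbral_min_cone_height (s : ℝ) (hs : 0 < s) (u v : ℝ × ℝ) :
    IsLeast
      {t : ℝ | ∃ x : ℝ, |u.1 - x| ≤ s * (t - u.2) ∧ |v.1 - x| ≤ s * (t - v.2)}
      (max u.2 (max v.2 (|u.1 - v.1| / (2 * s) + (u.2 + v.2) / 2))) := by
  refine (congrArg (IsLeast · _) ?_).mpr isLeast_Ici
  ext t
  simp only [Set.mem_ofPred_eq, Set.mem_Ici, exists_abs_sub_le_and_abs_sub_le_iff, max_le_iff,
    div_two_mul_add_half_le_iff hs, mul_nonneg_iff_of_pos_left hs, sub_nonneg]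
end

section
/- Fix r > 0. Let u = (u₁, u₂) and v = (v₁, v₂) be points of ℝ² with 0 < u₂ < r and 0 < v₂ < r. Set a = √(r² − u₂²), b = √(r² − v₂²), and d = |u₁ − v₁|, and assume that (d − a)² + v₂² < r² or d ≤ a. Then max(u₂, v₂, √(r² − ((a + b − d)/2)²)) is the least element of the set T = {t ∈ ℝ : 0 < t < r and there exists w₁ ∈ ℝ such that both u and v lie in cone_r((w₁, t))}. -/
noncomputable def penumbralCone (r : ℝ) (w : ℝ × ℝ) : Set (ℝ × ℝ) :=
  {z : ℝ × ℝ | 0 < z.2 ∧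
    edist2 z (w.1 + Real.sqrt (r ^ 2 - w.2 ^ 2), 0) ≤ r ∧
    edist2 z (w.1 - Real.sqrt (r ^ 2 - w.2 ^ 2), 0) ≤ r}

open Real

theorem edist2_le_iff {r : ℝ} (hr : 0 ≤ r) (p q : ℝ × ℝ) :
    edist2 p q ≤ r ↔ (p.1 - q.1) ^ 2 + (p.2 - q.2) ^ 2 ≤ r ^ 2 :=
  sqrt_le_left hr

theorem sq_add_sq_le_sq_iff_abs_le {x y r : ℝ} (hyr : y ^ 2 ≤ r ^ 2) :
    x ^ 2 + y ^ 2 ≤ r ^ 2 ↔ |x| ≤ √(r ^ 2 - y ^ 2) := by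
  rw [le_sqrt (abs_nonneg x) (sub_nonneg.2 hyr), sq_abs, le_sub_iff_add_le]

theorem abs_sub_add_le_and_abs_sub_sub_le_iff {x w s α : ℝ} (hs : 0 ≤ s) :
    |x - (w + s)| ≤ α ∧ |x - (w - s)| ≤ α ↔ |x - w| + s ≤ α := by
  rw [← le_sub_iff_add_le, abs_le, abs_le, abs_le]
  constructor
  · rintro ⟨⟨h₁, -⟩, -, h₂⟩
    constructor <;> linarith
  · rintro ⟨h₁, h₂⟩
    refine ⟨⟨?_, ?_⟩, ?_, ?_⟩ <;> linarith

theorem mem_penumbralCone_iff {r : ℝ} {z : ℝ × ℝ} (hz : 0 < z.2) (hzr : z.2 ≤ r) (w₁ t : ℝ) :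
    z ∈ penumbralCone r (w₁, t) ↔ |z.1 - w₁| + √(r ^ 2 - t ^ 2) ≤ √(r ^ 2 - z.2 ^ 2) := by
  have hzr2 : z.2 ^ 2 ≤ r ^ 2 := pow_le_pow_left₀ hz.le hzr 2
  simp only [penumbralCone, Set.mem_ofPred_eq, edist2_le_iff (hz.le.trans hzr), sub_zero,
    sq_add_sq_le_sq_iff_abs_le hzr2, hz, true_and]
  exact abs_sub_add_le_and_abs_sub_sub_le_iff (sqrt_nonneg _)

theorem exists_abs_sub_le_and_abs_sub_le_iff_s4 {x y p q : ℝ} :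
    (∃ w, |x - w| ≤ p ∧ |y - w| ≤ q) ↔ 0 ≤ p ∧ 0 ≤ q ∧ |x - y| ≤ p + q := by
  constructor
  · rintro ⟨w, hx, hy⟩
    exact ⟨(abs_nonneg _).trans hx, (abs_nonneg _).trans hy,
      (abs_sub_le x w y).trans (add_le_add hx (abs_sub_comm y w ▸ hy))⟩
  · rintro ⟨hp, hq, hxy⟩
    rw [abs_le] at hxy
    have hx : x - p ≤ max (x - p) (y - q) := le_max_left _ _
    have hy : y - q ≤ max (x - p) (y - q) := le_max_right _ _
    have hx' : max (x - p) (y - q) ≤ x + p := max_le (by linarith) (by linarith)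
    have hy' : max (x - p) (y - q) ≤ y + q := max_le (by linarith) (by linarith)
    exact ⟨_, abs_le.2 ⟨by linarith, by linarith⟩, abs_le.2 ⟨by linarith, by linarith⟩⟩

theorem sqrt_sq_sub_sq_le_comm {r t m : ℝ} (ht : 0 ≤ t) (hm : 0 ≤ m) :
    √(r ^ 2 - t ^ 2) ≤ m ↔ √(r ^ 2 - m ^ 2) ≤ t := by
  rw [sqrt_le_left hm, sqrt_le_left ht, sub_le_comm]

theorem sqrt_sq_sub_sq_le_sqrt_sq_sub_sq_iff {r t y : ℝ} (ht : 0 ≤ t) (hy : 0 ≤ y)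
    (hyr : y ≤ r) : √(r ^ 2 - t ^ 2) ≤ √(r ^ 2 - y ^ 2) ↔ y ≤ t := by
  rw [sqrt_sq_sub_sq_le_comm ht (sqrt_nonneg _),
    sq_sqrt (sub_nonneg.2 (pow_le_pow_left₀ hy hyr 2)), sub_sub_cancel, sqrt_sq hy]

theorem sqrt_sq_sub_sq_lt_self {r m : ℝ} (hr : 0 < r) (hm : m ≠ 0) : √(r ^ 2 - m ^ 2) < r :=
  (sqrt_lt' hr).2 (sub_lt_self _ (by positivity))

theorem exists_common_penumbralCone_iff {r a b t : ℝ} {u v : ℝ × ℝ}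
    (hu : 0 < u.2) (hur : u.2 ≤ r) (hv : 0 < v.2) (hvr : v.2 ≤ r)
    (ha : a = √(r ^ 2 - u.2 ^ 2)) (hb : b = √(r ^ 2 - v.2 ^ 2))
    (hab : |u.1 - v.1| ≤ a + b) (ht : 0 ≤ t) :
    (∃ w₁, u ∈ penumbralCone r (w₁, t) ∧ v ∈ penumbralCone r (w₁, t)) ↔
      max u.2 (max v.2 √(r ^ 2 - ((a + b - |u.1 - v.1|) / 2) ^ 2)) ≤ t := by
  simp only [mem_penumbralCone_iff hu hur, mem_penumbralCone_iff hv hvr, ← ha, ← hb,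
    ← le_sub_iff_add_le, exists_abs_sub_le_and_abs_sub_le_iff_s4, max_le_iff,
    ← sqrt_sq_sub_sq_le_sqrt_sq_sub_sq_iff ht hu.le hur,
    ← sqrt_sq_sub_sq_le_sqrt_sq_sub_sq_iff ht hv.le hvr,
    ← sqrt_sq_sub_sq_le_comm ht (by linarith : 0 ≤ (a + b - |u.1 - v.1|) / 2), sub_nonneg]
  exact and_congr_right' (and_congr_right' ⟨fun h => by linarith, fun h => by linarith⟩)

/-- With `a = √(r² − u₂²)`, `b = √(r² − v₂²)`, `d = |u₁ − v₁|`, under the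
cone-existence condition `(d − a)² + v₂² < r²` or `d ≤ a`, the quantity
`max(u₂, v₂, √(r² − ((a + b − d)/2)²))` is the least element of the set of
heights `t ∈ (0, r)` of roots of penumbral cones containing both `u` and `v`. -/
theorem penumbral_min_cone_height
    (r : ℝ) (hr : 0 < r) (u v : ℝ × ℝ)
    (hu2 : 0 < u.2) (hu2r : u.2 < r) (hv2 : 0 < v.2) (hv2r : v.2 < r)
    (a b d : ℝ)
    (ha : a = Real.sqrt (r ^ 2 - u.2 ^ 2)) (hb : b = Real.sqrt (r ^ 2 - v.2 ^ 2))
    (hd : d = |u.1 - v.1|)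
    (hex : (d - a) ^ 2 + v.2 ^ 2 < r ^ 2 ∨ d ≤ a) :
    IsLeast
      {t : ℝ | 0 < t ∧ t < r ∧
        ∃ w₁ : ℝ, u ∈ penumbralCone r (w₁, t) ∧ v ∈ penumbralCone r (w₁, t)}
      (max u.2 (max v.2 (Real.sqrt (r ^ 2 - ((a + b - d) / 2) ^ 2)))) := by
  subst hd
  have hm : 0 < a + b - |u.1 - v.1| := by
    rcases hex with h | h
    · have : |u.1 - v.1| - a < b := hb ▸ lt_sqrt_of_sq_lt (by linarith)
      linarith
    · have : 0 < b := hb ▸ sqrt_pos.2 (by nlinarith)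
      linarith
  have key := fun (t : ℝ) (ht : 0 ≤ t) =>
    exists_common_penumbralCone_iff hu2 hu2r.le hv2 hv2r.le ha hb (by linarith) ht
  refine ⟨⟨hu2.trans_le (le_max_left _ _),
    max_lt hu2r (max_lt hv2r (sqrt_sq_sub_sq_lt_self hr (by positivity))),
    (key _ (hu2.le.trans (le_max_left _ _))).2 le_rfl⟩, ?_⟩
  rintro t ⟨ht, -, hw⟩
  exact (key t ht.le).1 hw
end

section
/- Fix r > 0 and γ > 0. Define H : ℝ² × ℝ² → ℝ on the set D = {(u, v) = ((u₁, u₂), (v₁, v₂)) : 0 < u₂ < r, 0 < v₂ < r} by: writing a = √(r² − u₂²), b = √(r² − v₂²), d = |u₁ − v₁|, set H(u, v) = max(u₂, v₂, √(r² − ((a + b − d)/2)²)) if (d − a)² + v₂² < r² or d ≤ a, and H(u, v) = √(((d² + u₂² − v₂²)/(2d))² + v₂²) otherwise. Then H is continuous on D, and hence so is the penumbral attention kernel K(u, v) = exp(−γ·H(u, v)). -/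
/-!
With `a`, `b` the horizontal offsets from `u`, `v` to the centres of radius-`r` geodesics through
them and `d = |u₁ − v₁|`, the branch condition of `penumbralHeight` says exactly `d < a + b` on the
domain. Both branches are continuous where they are used (`d ≥ a + b > 0` in the second), and on
the switching curve `d = a + b` both equal `r`, so the piecewise function is continuous.
-/

open Classical

/-- The height function of penumbral attention: on a pair `(u, v)`, writing
`a = √(r² − u₂²)`, `b = √(r² − v₂²)`, `d = |u₁ − v₁|`, it is
`max(u₂, v₂, √(r² − ((a + b − d)/2)²))` if a cone containing `u` and `v`
exists (`(d − a)² + v₂² < r²` or `d ≤ a`), and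
`√(((d² + u₂² − v₂²)/(2d))² + v₂²)` otherwise. -/
noncomputable def penumbralHeight (r : ℝ) (p : (ℝ × ℝ) × (ℝ × ℝ)) : ℝ :=
  let u := p.1
  let v := p.2
  let a := Real.sqrt (r ^ 2 - u.2 ^ 2)
  let b := Real.sqrt (r ^ 2 - v.2 ^ 2)
  let d := |u.1 - v.1|
  if (d - a) ^ 2 + v.2 ^ 2 < r ^ 2 ∨ d ≤ a then
    max u.2 (max v.2 (Real.sqrt (r ^ 2 - ((a + b - d) / 2) ^ 2)))
  else
    Real.sqrt (((d ^ 2 + u.2 ^ 2 - v.2 ^ 2) / (2 * d)) ^ 2 + v.2 ^ 2)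

namespace PenumbralHeight

/-- Horizontal distance from a point at height `y` to the centre of a geodesic semicircle of
Euclidean radius `r` through it. -/
noncomputable def offset (r y : ℝ) : ℝ := √(r ^ 2 - y ^ 2)

noncomputable def coneHeight (r : ℝ) (p : (ℝ × ℝ) × (ℝ × ℝ)) : ℝ :=
  max p.1.2 (max p.2.2 √(r ^ 2 - ((offset r p.1.2 + offset r p.2.2 - |p.1.1 - p.2.1|) / 2) ^ 2))

noncomputable def geodesicRadius (p : (ℝ × ℝ) × (ℝ × ℝ)) : ℝ :=
  √(((|p.1.1 - p.2.1| ^ 2 + p.1.2 ^ 2 - p.2.2 ^ 2) / (2 * |p.1.1 - p.2.1|)) ^ 2 + p.2.2 ^ 2)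

@[fun_prop]
lemma continuous_offset (r : ℝ) : Continuous (offset r) := by
  unfold offset
  fun_prop

lemma offset_pos {r y : ℝ} (h : y ^ 2 < r ^ 2) : 0 < offset r y :=
  Real.sqrt_pos.mpr (sub_pos.mpr h)

lemma offset_add_offset_pos {r s t : ℝ} (hs : s ^ 2 < r ^ 2) : 0 < offset r s + offset r t :=
  add_pos_of_pos_of_nonneg (offset_pos hs) (Real.sqrt_nonneg _)

lemma offset_sq {r y : ℝ} (h : y ^ 2 ≤ r ^ 2) : offset r y ^ 2 = r ^ 2 - y ^ 2 :=
  Real.sq_sqrt (sub_nonneg.mpr h)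

lemma cone_condition_iff {r t a d : ℝ} (ht : t ^ 2 < r ^ 2) :
    (d - a) ^ 2 + t ^ 2 < r ^ 2 ∨ d ≤ a ↔ d < a + offset r t := by
  have hb := offset_pos ht
  have hb2 := offset_sq ht.le
  constructor
  · rintro (h | h)
    · nlinarith
    · linarith
  · intro h
    rcases le_or_gt d a with hda | hda
    · exact Or.inr hda
    · exact Or.inl (by nlinarith)

lemma penumbralHeight_eq_ite (r : ℝ) (p : (ℝ × ℝ) × (ℝ × ℝ)) :
    penumbralHeight r p =
      if (|p.1.1 - p.2.1| - offset r p.1.2) ^ 2 + p.2.2 ^ 2 < r ^ 2 ∨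
          |p.1.1 - p.2.1| ≤ offset r p.1.2
        then coneHeight r p else geodesicRadius p :=
  rfl

lemma penumbralHeight_eq_ite_lt {r : ℝ} {p : (ℝ × ℝ) × (ℝ × ℝ)} (hv : p.2.2 ^ 2 < r ^ 2) :
    penumbralHeight r p =
      if |p.1.1 - p.2.1| < offset r p.1.2 + offset r p.2.2
        then coneHeight r p else geodesicRadius p :=
  (penumbralHeight_eq_ite r p).trans (if_congr (cone_condition_iff hv) rfl rfl)

lemma continuous_coneHeight (r : ℝ) : Continuous (coneHeight r) := by
  unfold coneHeight
  fun_prop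

lemma continuousOn_geodesicRadius :
    ContinuousOn geodesicRadius {p : (ℝ × ℝ) × (ℝ × ℝ) | p.1.1 ≠ p.2.1} := by
  have hd : ∀ p ∈ {p : (ℝ × ℝ) × (ℝ × ℝ) | p.1.1 ≠ p.2.1}, 2 * |p.1.1 - p.2.1| ≠ 0 :=
    fun p hp => by simpa [sub_eq_zero] using hp
  unfold geodesicRadius
  exact ((((by fun_prop : Continuous _).continuousOn.div (by fun_prop) hd).pow 2).add
    (by fun_prop)).sqrt

section Junction

variable {r : ℝ} {p : (ℝ × ℝ) × (ℝ × ℝ)}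

lemma coneHeight_eq_of_dist_eq (hr : 0 ≤ r) (hu : p.1.2 ≤ r) (hv : p.2.2 ≤ r)
    (hd : |p.1.1 - p.2.1| = offset r p.1.2 + offset r p.2.2) : coneHeight r p = r := by
  simp only [coneHeight, hd, sub_self, zero_div]
  norm_num [Real.sqrt_sq hr, hu, hv]

lemma geodesicRadius_eq_of_dist_eq (hr : 0 ≤ r) (hu : p.1.2 ^ 2 ≤ r ^ 2) (hv : p.2.2 ^ 2 ≤ r ^ 2)
    (hpos : 0 < |p.1.1 - p.2.1|) (hd : |p.1.1 - p.2.1| = offset r p.1.2 + offset r p.2.2) :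
    geodesicRadius p = r := by
  -- with `d = a + b`, `d² + u₂² − v₂² = (a + b)² − a² + b² = 2bd`
  have hnum : |p.1.1 - p.2.1| ^ 2 + p.1.2 ^ 2 - p.2.2 ^ 2
      = offset r p.2.2 * (2 * |p.1.1 - p.2.1|) := by
    rw [hd]; linear_combination offset_sq hu - offset_sq hv
  rw [geodesicRadius, hnum, mul_div_cancel_right₀ _ (by positivity), offset_sq hv,
    sub_add_cancel, Real.sqrt_sq hr]

end Junction

theorem continuousOn_penumbralHeight (r : ℝ) :
    ContinuousOn (penumbralHeight r)
      {p : (ℝ × ℝ) × (ℝ × ℝ) | 0 < p.1.2 ∧ p.1.2 < r ∧ 0 < p.2.2 ∧ p.2.2 < r} := by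
  have hdist : Continuous fun p : (ℝ × ℝ) × (ℝ × ℝ) => |p.1.1 - p.2.1| := by fun_prop
  have hsum : Continuous fun p : (ℝ × ℝ) × (ℝ × ℝ) => offset r p.1.2 + offset r p.2.2 := by
    fun_prop
  refine ContinuousOn.congr (f := fun p =>
      if |p.1.1 - p.2.1| < offset r p.1.2 + offset r p.2.2
        then coneHeight r p else geodesicRadius p) ?_
    fun p ⟨_, _, hv0, hvr⟩ => penumbralHeight_eq_ite_lt (sq_lt_sq' (by linarith) hvr)
  refine ContinuousOn.if (fun p ⟨⟨hu0, hur, hv0, hvr⟩, hp⟩ => ?_)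
    (continuous_coneHeight r).continuousOn (continuousOn_geodesicRadius.mono ?_)
  · have hu := sq_lt_sq' (by linarith) hur
    have hd : |p.1.1 - p.2.1| = _ := frontier_lt_subset_eq hdist hsum hp
    have hr : 0 ≤ r := by linarith
    rw [coneHeight_eq_of_dist_eq hr hur.le hvr.le hd, geodesicRadius_eq_of_dist_eq hr hu.le
      (sq_lt_sq' (by linarith) hvr).le (hd ▸ offset_add_offset_pos hu) hd]
  · simp only [not_lt, (isClosed_le hsum hdist).closure_eq]
    rintro p ⟨⟨hu0, hur, -, -⟩, hp⟩ heq
    have := offset_add_offset_pos (t := p.2.2) (sq_lt_sq' (by linarith) hur)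
    simp only [Set.mem_ofPred_eq, heq, sub_self, abs_zero] at hp
    linarith

end PenumbralHeight

theorem penumbralHeight_continuousOn_general (r γ : ℝ) :
    ContinuousOn (penumbralHeight r)
      {p : (ℝ × ℝ) × (ℝ × ℝ) | 0 < p.1.2 ∧ p.1.2 < r ∧ 0 < p.2.2 ∧ p.2.2 < r} ∧
    ContinuousOn (fun p => Real.exp (-γ * penumbralHeight r p))
      {p : (ℝ × ℝ) × (ℝ × ℝ) | 0 < p.1.2 ∧ p.1.2 < r ∧ 0 < p.2.2 ∧ p.2.2 < r} := by
  have h := PenumbralHeight.continuousOn_penumbralHeight r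
  exact ⟨h, (continuousOn_const.mul h).rexp⟩

/-- The penumbral height function `H`, and hence the penumbral attention
kernel `K(u, v) = exp(−γ·H(u, v))`, is continuous on the domain
`D = {((u₁, u₂), (v₁, v₂)) : 0 < u₂ < r, 0 < v₂ < r}`. -/
theorem penumbralHeight_continuousOn (r γ : ℝ) (hr : 0 < r) (hγ : 0 < γ) :
    ContinuousOn (penumbralHeight r)
      {p : (ℝ × ℝ) × (ℝ × ℝ) | 0 < p.1.2 ∧ p.1.2 < r ∧ 0 < p.2.2 ∧ p.2.2 < r} ∧
    ContinuousOn (fun p => Real.exp (-γ * penumbralHeight r p))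
      {p : (ℝ × ℝ) × (ℝ × ℝ) | 0 < p.1.2 ∧ p.1.2 < r ∧ 0 < p.2.2 ∧ p.2.2 < r} :=
  penumbralHeight_continuousOn_general r γ
end

section
/- Let γ > 0, r > 0, t > 0, and let u', v'₁, …, v'ₙ be points of a Euclidean space ℝ^m with n ≥ 1. Define the umbral attention kernel at equal heights by K(u', w') = exp(−γ·max(t, t, ‖u' − w'‖/(2·sinh r) + (t + t)/2)) and the Laplacian kernel by L(u', w') = exp(−(γ/(2·sinh r))·‖u' − w'‖). Then K(u', w') = exp(−γt)·L(u', w') for every w', and consequently for every i, K(u', v'ᵢ) / Σⱼ K(u', v'ⱼ) = L(u', v'ᵢ) / Σⱼ L(u', v'ⱼ). -/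
open Real

lemma max_max_add_add_self_div_two_eq_add {x : ℝ} (t : ℝ) (hx : 0 ≤ x) :
    max t (max t (x + (t + t) / 2)) = x + t := by
  have hle : t ≤ x + t := by linarith
  rw [add_self_div_two, max_eq_right hle, max_eq_right hle]

lemma div_sum_eq_div_sum_of_eq_const_mul {ι K : Type*} [Field K] {f g : ι → K} {c : K}
    (hc : c ≠ 0) (hfg : ∀ i, f i = c * g i) (s : Finset ι) (i : ι) :
    f i / ∑ j ∈ s, f j = g i / ∑ j ∈ s, g j := by
  rw [hfg, Finset.sum_congr rfl fun j _ => hfg j, ← Finset.mul_sum, mul_div_mul_left _ _ hc]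

lemma umbral_weight_eq_exp_neg_mul_mul_laplacian_weight {γ r t : ℝ} (hr : 0 < r) {d : ℝ} (hd : 0 ≤ d) :
    exp (-γ * max t (max t (d / (2 * sinh r) + (t + t) / 2))) =
      exp (-γ * t) * exp (-(γ / (2 * sinh r)) * d) := by
  have hsinh : 0 < sinh r := sinh_pos_iff.mpr hr
  rw [max_max_add_add_self_div_two_eq_add t (by positivity), ← exp_add]
  ring_nf

open Finset in
theorem umbral_attention_eq_laplacian_on_horosphere_general
    (γ r t : ℝ) (hr : 0 < r)
    (m n : ℕ)
    (u' : EuclideanSpace ℝ (Fin m)) (v' : Fin n → EuclideanSpace ℝ (Fin m))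
    (K L : EuclideanSpace ℝ (Fin m) → ℝ)
    (hK : ∀ w', K w' =
      Real.exp (-γ * max t (max t (‖u' - w'‖ / (2 * Real.sinh r) + (t + t) / 2))))
    (hL : ∀ w', L w' = Real.exp (-(γ / (2 * Real.sinh r)) * ‖u' - w'‖)) :
    (∀ w', K w' = Real.exp (-γ * t) * L w') ∧
    ∀ i : Fin n,
      K (v' i) / ∑ j : Fin n, K (v' j) = L (v' i) / ∑ j : Fin n, L (v' j) := by
  have hKL : ∀ w', K w' = exp (-γ * t) * L w' := fun w' => by
    rw [hK, hL, umbral_weight_eq_exp_neg_mul_mul_laplacian_weight hr (norm_nonneg _)]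
  exact ⟨hKL, div_sum_eq_div_sum_of_eq_const_mul (exp_ne_zero _) (fun j => hKL (v' j)) univ⟩

open Finset in
/-- Umbral attention at a common height `t` (on a common horosphere) is a
positive multiple of the Laplacian kernel, so after softmax normalization the
two kernels agree. -/
theorem umbral_attention_eq_laplacian_on_horosphere
    (γ r t : ℝ) (hγ : 0 < γ) (hr : 0 < r) (ht : 0 < t)
    (m n : ℕ) (hn : 1 ≤ n)
    (u' : EuclideanSpace ℝ (Fin m)) (v' : Fin n → EuclideanSpace ℝ (Fin m))
    (K L : EuclideanSpace ℝ (Fin m) → ℝ)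
    (hK : ∀ w', K w' =
      Real.exp (-γ * max t (max t (‖u' - w'‖ / (2 * Real.sinh r) + (t + t) / 2))))
    (hL : ∀ w', L w' = Real.exp (-(γ / (2 * Real.sinh r)) * ‖u' - w'‖)) :
    (∀ w', K w' = Real.exp (-γ * t) * L w') ∧
    ∀ i : Fin n,
      K (v' i) / ∑ j : Fin n, K (v' j) = L (v' i) / ∑ j : Fin n, L (v' j) :=
  umbral_attention_eq_laplacian_on_horosphere_general γ r t hr m n u' v' K L hK hL
end

section
/- Let (P, ≤) be a finite partial order with n ≥ 1 elements such that for every x ∈ P, the set {y ∈ P : y ≤ x} is a chain. Then there exists a bijection e : Fin n → P such that the sign matrix S : Fin n → Fin n → ℤ defined by S i j = 1 if e(i) ≤ e(j) and S i j = −1 otherwise satisfies: for every row index i, the number of column indices j with j + 1 < n and S i j ≠ S i (j+1) is at most 2. -/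
/-!
List the elements along a linear extension; the ancestors of `x`, in that order, form the
root-to-`x` path of the forest. Sort the elements lexicographically by these paths (a depth-first
order). The elements above `x` are exactly those whose path extends the path of `x`, and lists
with a fixed prefix form an interval in the lexicographic order, so each row of the sign matrix
reads `-1 … -1, 1 … 1, -1 … -1`.
-/

open Classical

namespace List

variable {α : Type*}

-- Mathlib's `≤` on `List α` is not core's `List.le`, so core's `List.cons_le_cons_iff` does not
-- apply to it verbatim.
theorem cons_le_cons_iff_of_linearOrder [LinearOrder α] {a b : α} {l l' : List α} :
    a :: l ≤ b :: l' ↔ a < b ∨ a = b ∧ l ≤ l' := by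
  rw [← not_lt, ← not_lt]
  exact List.cons_le_cons_iff

theorem IsPrefix.of_le_of_le [LinearOrder α] {p a b c : List α} (ha : p <+: a) (hc : p <+: c)
    (hab : a ≤ b) (hbc : b ≤ c) : p <+: b := by
  induction p generalizing a b c with
  | nil => exact nil_prefix
  | cons x p ih =>
    obtain ⟨a, rfl, hpa⟩ := cons_prefix_iff.mp ha
    obtain ⟨c, rfl, hpc⟩ := cons_prefix_iff.mp hc
    obtain _ | ⟨y, b⟩ := b
    · exact absurd (nil_lt_cons x a) (not_lt.mpr hab)
    rw [cons_le_cons_iff_of_linearOrder] at hab hbc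
    rcases hab with hxy | ⟨rfl, hab⟩
    · rcases hbc with hyx | ⟨rfl, -⟩
      · exact absurd hxy hyx.asymm
      · exact absurd hxy (lt_irrefl _)
    · rcases hbc with hyx | ⟨-, hbc⟩
      · exact absurd hyx (lt_irrefl _)
      · exact cons_prefix_cons.mpr ⟨rfl, ih hpa hpc hab hbc⟩

theorem filter_prefix_filter {l : List α} {p q : α → Bool} (hqp : ∀ a ∈ l, q a → p a)
    (hl : l.Pairwise fun a b => p a → q b → q a) : l.filter q <+: l.filter p := by
  induction l with
  | nil => exact nil_prefix
  | cons a l ih =>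
    rw [pairwise_cons] at hl
    have ih := ih (fun b hb => hqp b (mem_cons_of_mem a hb)) hl.2
    by_cases hqa : q a
    · simp [hqa, hqp a mem_cons_self hqa, ih]
    by_cases hpa : p a
    · have : l.filter q = [] := filter_eq_nil_iff.mpr fun b hb hqb => hqa (hl.1 b hb hpa hqb)
      simp [hqa, hpa, this]
    · simpa [filter_cons, hqa, hpa] using ih

end List

theorem exists_list_forall_mem_pairwise_not_lt (P : Type*) [Fintype P] [PartialOrder P] :
    ∃ L : List P, (∀ x, x ∈ L) ∧ L.Pairwise fun u v => ¬ v < u := by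
  refine ⟨Finset.univ.toList.mergeSort fun u v => toLinearExtension u ≤ toLinearExtension v,
    by simp, ?_⟩
  refine (List.pairwise_mergeSort (fun _ _ _ => by simpa using le_trans)
    (fun u v => by simpa using le_total _ _) _).imp fun {u v} huv hvu => ?_
  have : toLinearExtension u ≤ toLinearExtension v := by simpa using huv
  exact hvu.ne (show toLinearExtension v = toLinearExtension u from
    le_antisymm (toLinearExtension.monotone hvu.le) this)

section AncestorCode

variable {P α : Type*} [PartialOrder P]

noncomputable def ancestorCode (L : List P) (ρ : P → α) (x : P) : List α :=
  (L.filter (· ≤ x)).map ρ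

variable {L : List P} {ρ : P → α}

theorem ancestorCode_prefix_of_le (hchain : ∀ x : P, IsChain (· ≤ ·) {y : P | y ≤ x})
    (hL : L.Pairwise fun u v => ¬ v < u) {x a : P} (hxa : x ≤ a) :
    ancestorCode L ρ x <+: ancestorCode L ρ a := by
  refine (List.filter_prefix_filter (by simpa using fun z _ hz => hz.trans hxa)
    (hL.imp fun {u v} hvu => ?_)).map ρ
  simp only [decide_eq_true_eq]
  intro hua hvx
  rcases (hchain a).total hua (hvx.trans hxa) with huv | hvu'
  · exact huv.trans hvx
  · exact hvu'.eq_of_not_lt hvu ▸ hvx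

theorem le_of_ancestorCode_prefix (hρ : Function.Injective ρ) {x b : P} (hx : x ∈ L)
    (h : ancestorCode L ρ x <+: ancestorCode L ρ b) : x ≤ b := by
  have : ρ x ∈ ancestorCode L ρ b :=
    h.subset (List.mem_map_of_mem (List.mem_filter.2 ⟨hx, by simp⟩))
  obtain ⟨z, hz, hzx⟩ := List.mem_map.1 this
  rw [hρ hzx] at hz
  simpa using (List.mem_filter.1 hz).2

theorem ancestorCode_injective (hmem : ∀ x, x ∈ L) (hρ : Function.Injective ρ) :
    Function.Injective (ancestorCode L ρ) := fun x y h =>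
  le_antisymm (le_of_ancestorCode_prefix hρ (hmem x) (h ▸ List.prefix_rfl))
    (le_of_ancestorCode_prefix hρ (hmem y) (h ▸ List.prefix_rfl))

theorem le_of_ancestorCode_mem_Icc [LinearOrder α]
    (hchain : ∀ x : P, IsChain (· ≤ ·) {y : P | y ≤ x}) (hL : L.Pairwise fun u v => ¬ v < u)
    (hρ : Function.Injective ρ) {x a b c : P} (hx : x ∈ L)
    (hxa : x ≤ a) (hxc : x ≤ c)
    (hb : ancestorCode L ρ b ∈ Set.Icc (ancestorCode L ρ a) (ancestorCode L ρ c)) : x ≤ b :=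
  le_of_ancestorCode_prefix hρ hx <|
    (ancestorCode_prefix_of_le hchain hL hxa).of_le_of_le
      (ancestorCode_prefix_of_le hchain hL hxc) hb.1 hb.2

end AncestorCode

theorem Fintype.exists_equiv_fin_strictMono {P β : Type*} [Fintype P] [LinearOrder β] {f : P → β}
    (hf : Function.Injective f) {n : ℕ} (hn : Fintype.card P = n) :
    ∃ e : Fin n ≃ P, StrictMono (f ∘ e) := by
  let : LinearOrder P := LinearOrder.lift' f hf
  exact ⟨(Fintype.orderIsoFinOfCardEq P hn).toEquiv, (Fintype.orderIsoFinOfCardEq P hn).strictMono⟩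

theorem Set.OrdConnected.card_signChanges_le_two {n : ℕ} {s : Set (Fin n)}
    (hs : s.OrdConnected) :
    (Finset.univ.filter fun j : Fin n => ∃ h : (j : ℕ) + 1 < n,
      (if j ∈ s then (1 : ℤ) else -1) ≠ (if (⟨(j : ℕ) + 1, h⟩ : Fin n) ∈ s then 1 else -1)).card
      ≤ 2 := by
  have card_le_one : ∀ t : Finset (Fin n), (∀ j ∈ t, ∀ k ∈ t, ¬ j < k) → t.card ≤ 1 :=
    fun t ht => Finset.card_le_one.2 fun j hj k hk =>
      le_antisymm (not_lt.1 (ht k hk j hj)) (not_lt.1 (ht j hj k hk))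
  set entries := Finset.univ.filter fun j : Fin n =>
    ∃ h : (j : ℕ) + 1 < n, j ∉ s ∧ (⟨(j : ℕ) + 1, h⟩ : Fin n) ∈ s
  set exits := Finset.univ.filter fun j : Fin n =>
    ∃ h : (j : ℕ) + 1 < n, j ∈ s ∧ (⟨(j : ℕ) + 1, h⟩ : Fin n) ∉ s
  have hentries : entries.card ≤ 1 := card_le_one _ fun j hj k hk hjk => by
    obtain ⟨_, -, hj_succ⟩ := (Finset.mem_filter.1 hj).2
    obtain ⟨_, hk_out, hk_succ⟩ := (Finset.mem_filter.1 hk).2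
    exact hk_out (hs.out hj_succ hk_succ ⟨Fin.le_def.2 hjk, Fin.le_def.2 (Nat.le_succ _)⟩)
  have hexits : exits.card ≤ 1 := card_le_one _ fun j hj k hk hjk => by
    obtain ⟨_, hj_in, hj_succ⟩ := (Finset.mem_filter.1 hj).2
    obtain ⟨_, hk_in, -⟩ := (Finset.mem_filter.1 hk).2
    exact hj_succ (hs.out hj_in hk_in ⟨Fin.le_def.2 (Nat.le_succ _), Fin.le_def.2 hjk⟩)
  refine (Finset.card_le_card (t := entries ∪ exits) fun j => ?_).trans
    ((Finset.card_union_le _ _).trans (by omega))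
  simp only [entries, exits, Finset.mem_union, Finset.mem_filter, Finset.mem_univ, true_and]
  rintro ⟨h, hne⟩
  by_cases hj : j ∈ s <;> by_cases hj' : (⟨(j : ℕ) + 1, h⟩ : Fin n) ∈ s <;> simp_all

theorem forest_order_sign_matrix_two_sign_changes_general
    (P : Type*) [Fintype P] [PartialOrder P] (n : ℕ)
    (hcard : Fintype.card P = n)
    (hchain : ∀ x : P, IsChain (· ≤ ·) {y : P | y ≤ x}) :
    ∃ e : Fin n → P, Function.Bijective e ∧
      ∀ i : Fin n,
        (Finset.univ.filter (fun j : Fin n =>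
          ∃ h : (j : ℕ) + 1 < n,
            (if e i ≤ e j then (1 : ℤ) else -1) ≠
              (if e i ≤ e ⟨(j : ℕ) + 1, h⟩ then (1 : ℤ) else -1))).card ≤ 2 := by
  obtain ⟨L, hmem, hL⟩ := exists_list_forall_mem_pairwise_not_lt P
  have hρ := (Fintype.equivFin P).injective
  obtain ⟨e, he⟩ := Fintype.exists_equiv_fin_strictMono
    (ancestorCode_injective hmem hρ) hcard
  refine ⟨e, e.bijective, fun i => Set.OrdConnected.card_signChanges_le_two (s := {j | e i ≤ e j})
    ⟨fun a ha c hc b hb => le_of_ancestorCode_mem_Icc hchain hL hρ (hmem _) ha hc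
      ⟨he.monotone hb.1, he.monotone hb.2⟩⟩⟩

/-- A finite forest order (every principal down-set is a chain) on `n ≥ 1`
elements admits an ordering `e : Fin n → P` such that the sign matrix
`S i j = 1` if `e i ≤ e j`, `−1` otherwise, has at most `2` sign changes in
every row. -/
theorem forest_order_sign_matrix_two_sign_changes
    (P : Type*) [Fintype P] [PartialOrder P] (n : ℕ)
    (hcard : Fintype.card P = n) (hn : 1 ≤ n)
    (hchain : ∀ x : P, IsChain (· ≤ ·) {y : P | y ≤ x}) :
    ∃ e : Fin n → P, Function.Bijective e ∧
      ∀ i : Fin n,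
        (Finset.univ.filter (fun j : Fin n =>
          ∃ h : (j : ℕ) + 1 < n,
            (if e i ≤ e j then (1 : ℤ) else -1) ≠
              (if e i ≤ e ⟨(j : ℕ) + 1, h⟩ then (1 : ℤ) else -1))).card ≤ 2 :=
  forest_order_sign_matrix_two_sign_changes_general P n hcard hchain
end
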